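/- arXiv:1106.5413 — 4 statements merged into one kernel-verified Lean document; each statement's English description precedes it below -/
import Mathlib

section
/- Let A ∈ R^{m×n}, b ∈ R^m, μ > 0, and define G_μ(y) = -min_w { ‖w‖₁ + (1/(2μ))‖w‖² - ⟨y, Aw - b⟩ }. Then G_μ is differentiable with ∇G_μ(y) = A w*(y) - b where w*(y) = μ·shrink(Aᵀy, 1), and ∇G_μ is Lipschitz continuous with Lipschitz constant at most μ‖A‖², where ‖A‖ is the operator (spectral) norm of A. -/
open scoped RealInnerProductSpace

abbrev E (n : ℕ) := EuclideanSpace ℝ (Fin n)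

noncomputable def shrink {n : ℕ} (α : ℝ) (z : E n) : E n :=
  WithLp.toLp 2 (fun i => Real.sign (z i) * max (|z i| - α) 0)

/-!
Write `L y w = ‖w‖₁ + ‖w‖² / (2μ) - ⟪y, A w - b⟫`. It splits into a sum of scalar problems
`|wᵢ| + wᵢ² / (2μ) - (Aᵀy)ᵢ wᵢ`, each minimised at `μ · shrink(aᵢ, 1)` because `a - shrink(a, 1)` is a
subgradient of `|·|` at `shrink(a, 1)`. Hence `G y = -L y (w* y)`, and since `L` is affine in `y`,
`A w*(y) - b` is a subgradient of the convex function `G` at `y`. Soft thresholding is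
`1`-Lipschitz, so `y ↦ A w*(y) - b` is `μ‖A‖²`-Lipschitz; a convex function with a continuous
subgradient selection is differentiable, with that selection as its gradient.
-/

open ContinuousLinearMap Filter Topology

section Subgradient

variable {F : Type*} [NormedAddCommGroup F] [InnerProductSpace ℝ F] [CompleteSpace F]

theorem hasGradientAt_of_subgradient_of_continuousAt {f : F → ℝ} {g : F → F} {x : F}
    (hsub : ∀ y z, f y + ⟪g y, z - y⟫ ≤ f z) (hg : ContinuousAt g x) :
    HasGradientAt f (g x) x := by
  rw [hasGradientAt_iff_hasFDerivAt, hasFDerivAt_iff_isLittleO_nhds_zero,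
    Asymptotics.isLittleO_iff]
  intro c hc
  have hg_shift : Tendsto (fun h => g (x + h)) (𝓝 0) (𝓝 (g x)) :=
    hg.tendsto.comp (by simpa using (continuous_const_add x).tendsto 0)
  filter_upwards [hg_shift.eventually (Metric.closedBall_mem_nhds (g x) hc)] with h hh
  rw [dist_eq_norm] at hh
  simp only [InnerProductSpace.toDual_apply_apply]
  have lower := hsub x (x + h)
  have upper := hsub (x + h) x
  rw [add_sub_cancel_left] at lower
  rw [show x - (x + h) = -h by abel, inner_neg_right] at upper
  have hinc : ⟪g (x + h) - g x, h⟫ ≤ c * ‖h‖ :=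
    (real_inner_le_norm _ _).trans (mul_le_mul_of_nonneg_right hh (norm_nonneg h))
  rw [inner_sub_left] at hinc
  rw [Real.norm_of_nonneg (by linarith)]
  linarith

end Subgradient

noncomputable def softThreshold (α a : ℝ) : ℝ := Real.sign a * max (|a| - α) 0

theorem shrink_apply {n : ℕ} (α : ℝ) (z : E n) (i : Fin n) :
    shrink α z i = softThreshold α (z i) := rfl

section SoftThreshold

variable {α : ℝ} (hα : 0 ≤ α)
include hα

theorem softThreshold_eq_sub_clamp (a : ℝ) : softThreshold α a = a - max (-α) (min a α) := by
  unfold softThreshold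
  rcases lt_trichotomy a 0 with h | rfl | h
  · rw [Real.sign_of_neg h, abs_of_neg h]
    simp only [max_def, min_def]; split_ifs <;> linarith
  · simp [hα]
  · rw [Real.sign_of_pos h, abs_of_pos h]
    simp only [max_def, min_def]; split_ifs <;> linarith

theorem lipschitzWith_softThreshold : LipschitzWith 1 (softThreshold α) := by
  refine LipschitzWith.mk_one fun a c => ?_
  simp only [Real.dist_eq, softThreshold_eq_sub_clamp hα]
  refine abs_le.2 ⟨?_, ?_⟩ <;> simp only [max_def, min_def] <;> split_ifs <;>
    linarith [neg_abs_le (a - c), le_abs_self (a - c)]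

theorem abs_sub_softThreshold_le (a : ℝ) : |a - softThreshold α a| ≤ α := by
  rw [softThreshold_eq_sub_clamp hα, sub_sub_cancel]
  exact abs_le.2 ⟨le_max_left _ _, max_le (by linarith) (min_le_right _ _)⟩

theorem sub_softThreshold_mul_self (a : ℝ) :
    (a - softThreshold α a) * softThreshold α a = α * |softThreshold α a| := by
  rw [softThreshold_eq_sub_clamp hα, sub_sub_cancel]
  rcases le_or_gt a (-α) with h | h
  · rw [min_eq_left (by linarith), max_eq_left h, abs_of_nonpos (by linarith)]; ring
  rcases le_or_gt a α with h' | h'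
  · rw [min_eq_left h', max_eq_right h.le, sub_self, abs_zero, mul_zero, mul_zero]
  · rw [min_eq_right h'.le, max_eq_right (by linarith), abs_of_pos (by linarith)]

theorem isMinOn_softThreshold {μ : ℝ} (hμ : 0 < μ) (a : ℝ) :
    IsMinOn (fun w => α * |w| + 1 / (2 * μ) * w ^ 2 - a * w) Set.univ
      (μ * softThreshold α a) := by
  refine isMinOn_univ_iff.2 fun w => ?_
  set s := softThreshold α a
  have hcw : (a - s) * w ≤ α * |w| := by
    calc (a - s) * w ≤ |a - s| * |w| := by rw [← abs_mul]; exact le_abs_self _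
      _ ≤ α * |w| := by gcongr; exact abs_sub_softThreshold_le hα a
  have hcs : α * |μ * s| = μ * ((a - s) * s) := by
    rw [abs_mul, abs_of_pos hμ, sub_softThreshold_mul_self hα]; ring
  have hgap : (α * |w| + 1 / (2 * μ) * w ^ 2 - a * w)
      - (α * |μ * s| + 1 / (2 * μ) * (μ * s) ^ 2 - a * (μ * s))
      = (α * |w| - (a - s) * w) + (w - μ * s) ^ 2 / (2 * μ) := by
    rw [hcs]; field_simp; ring
  have : 0 ≤ (w - μ * s) ^ 2 / (2 * μ) := by positivity
  linarith

theorem lipschitzWith_shrink {n : ℕ} : LipschitzWith 1 (shrink (n := n) α) := by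
  refine LipschitzWith.mk_one fun u v => ?_
  simp only [EuclideanSpace.dist_eq, shrink_apply]
  gcongr with i
  simpa using (lipschitzWith_softThreshold hα).dist_le_mul (u i) (v i)

end SoftThreshold

section Dual

variable {m n : ℕ} (A : E n →L[ℝ] E m) (b : E m) {μ : ℝ}

noncomputable def lagrangian (μ : ℝ) (y : E m) (w : E n) : ℝ :=
  (∑ i, |w i|) + (1 / (2 * μ)) * ‖w‖ ^ 2 - ⟪y, A w - b⟫

theorem lagrangian_eq_sum (y : E m) (w : E n) :
    lagrangian A b μ y w
      = (∑ i, (|w i| + 1 / (2 * μ) * w i ^ 2 - (adjoint A y) i * w i)) + ⟪y, b⟫ := by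
  have hnorm : ‖w‖ ^ 2 = ∑ i, w i ^ 2 := by simp [EuclideanSpace.norm_sq_eq]
  have hinner : ⟪y, A w - b⟫ = (∑ i, (adjoint A y) i * w i) - ⟪y, b⟫ := by
    rw [inner_sub_right, ← adjoint_inner_left, PiLp.inner_apply]
    simp only [RCLike.inner_apply, conj_trivial]
    exact congrArg (· - _) (Finset.sum_congr rfl fun i _ => mul_comm _ _)
  rw [lagrangian, hnorm, hinner, Finset.sum_sub_distrib, Finset.sum_add_distrib, Finset.mul_sum]
  ring

theorem lagrangian_smul_shrink_le (hμ : 0 < μ) (y : E m) (w : E n) :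
    lagrangian A b μ y (μ • shrink 1 (adjoint A y)) ≤ lagrangian A b μ y w := by
  rw [lagrangian_eq_sum, lagrangian_eq_sum]
  rw [add_le_add_iff_right]
  refine Finset.sum_le_sum fun i _ => ?_
  have hi := isMinOn_univ_iff.1 (isMinOn_softThreshold zero_le_one hμ ((adjoint A y) i)) (w i)
  simpa only [PiLp.smul_apply, smul_eq_mul, shrink_apply, one_mul] using hi

theorem iInf_lagrangian (hμ : 0 < μ) (y : E m) :
    ⨅ w, lagrangian A b μ y w = lagrangian A b μ y (μ • shrink 1 (adjoint A y)) :=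
  ciInf_eq_of_forall_ge_of_forall_gt_exists_lt (lagrangian_smul_shrink_le A b hμ y)
    fun _ h => ⟨_, h⟩

theorem neg_lagrangian_add_inner_le (hμ : 0 < μ) (y y' : E m) :
    -lagrangian A b μ y (μ • shrink 1 (adjoint A y)) + ⟪A (μ • shrink 1 (adjoint A y)) - b, y' - y⟫
      ≤ -lagrangian A b μ y' (μ • shrink 1 (adjoint A y')) := by
  set w := μ • shrink 1 (adjoint A y)
  have hmin := lagrangian_smul_shrink_le A b hμ y' w
  have haffine : lagrangian A b μ y' w = lagrangian A b μ y w - ⟪y' - y, A w - b⟫ := by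
    rw [lagrangian, lagrangian, inner_sub_left]; ring
  rw [real_inner_comm]
  linarith

theorem norm_map_smul_shrink_adjoint_sub_le {α : ℝ} (hμ : 0 ≤ μ) (hα : 0 ≤ α) (y₁ y₂ : E m) :
    ‖A (μ • shrink α (adjoint A y₁)) - A (μ • shrink α (adjoint A y₂))‖ ≤ μ * ‖A‖ ^ 2 * ‖y₁ - y₂‖ := by
  have hadj : ‖adjoint A‖ = ‖A‖ := adjoint.norm_map A
  calc ‖A (μ • shrink α (adjoint A y₁)) - A (μ • shrink α (adjoint A y₂))‖
      = ‖A (μ • (shrink α (adjoint A y₁) - shrink α (adjoint A y₂)))‖ := by rw [smul_sub, map_sub]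
    _ ≤ ‖A‖ * ‖μ • (shrink α (adjoint A y₁) - shrink α (adjoint A y₂))‖ := A.le_opNorm _
    _ = ‖A‖ * (μ * ‖shrink α (adjoint A y₁) - shrink α (adjoint A y₂)‖) := by
      rw [norm_smul, Real.norm_of_nonneg hμ]
    _ ≤ ‖A‖ * (μ * ‖adjoint A y₁ - adjoint A y₂‖) := by
      gcongr; simpa using (lipschitzWith_shrink hα).norm_sub_le (adjoint A y₁) (adjoint A y₂)
    _ ≤ ‖A‖ * (μ * (‖A‖ * ‖y₁ - y₂‖)) := by
      gcongr; rw [← map_sub, ← hadj]; exact (adjoint A).le_opNorm _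
    _ = μ * ‖A‖ ^ 2 * ‖y₁ - y₂‖ := by ring

end Dual

theorem dual_gradient_and_lipschitz {m n : ℕ}
    (A : E n →L[ℝ] E m) (b : E m) (μ : ℝ) (hμ : 0 < μ)
    (G : E m → ℝ)
    (hG : ∀ y, G y = -(⨅ w : E n,
      (∑ i, |w i|) + (1 / (2 * μ)) * ‖w‖ ^ 2 - ⟪y, A w - b⟫))
    (wstar : E m → E n)
    (hw : ∀ y, wstar y = μ • shrink 1 ((ContinuousLinearMap.adjoint A) y)) :
    (∀ y, HasGradientAt G (A (wstar y) - b) y) ∧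
    (∀ y₁ y₂ : E m,
      ‖(A (wstar y₁) - b) - (A (wstar y₂) - b)‖ ≤ μ * ‖A‖ ^ 2 * ‖y₁ - y₂‖) := by
  obtain rfl : wstar = fun y => μ • shrink 1 (adjoint A y) := funext hw
  obtain rfl : G = fun y => -lagrangian A b μ y (μ • shrink 1 (adjoint A y)) :=
    funext fun y => by rw [hG, ← iInf_lagrangian A b hμ]; rfl
  have hLip := norm_map_smul_shrink_adjoint_sub_le A hμ.le zero_le_one
  have hcont : Continuous fun y => A (μ • shrink 1 (adjoint A y)) - b :=
    (LipschitzWith.of_dist_le' fun y₁ y₂ => by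
      simpa only [dist_eq_norm] using hLip y₁ y₂).continuous.sub continuous_const
  refine ⟨fun y => hasGradientAt_of_subgradient_of_continuousAt
      (neg_lagrangian_add_inner_le A b hμ) hcont.continuousAt, fun y₁ y₂ => ?_⟩
  rw [sub_sub_sub_cancel_right]
  exact hLip y₁ y₂
end

section
/- Let J : R^n → R be convex, A ∈ R^{m×n}, b ∈ R^m. The Bregman iterative method starting from x⁰ = p⁰ = 0, with x^{k+1} = argmin_x { J(x) - J(x^k) - ⟨p^k, x - x^k⟩ + (1/2)‖Ax - b‖² } and p^{k+1} = p^k - Aᵀ(Ax^{k+1} - b), generates exactly the same sequence {x^k} as the augmented Lagrangian method x^{k+1} = argmin_x { J(x) - ⟨λ^k, Ax - b⟩ + (1/2)‖Ax - b‖² }, λ^{k+1} = λ^k - (Ax^{k+1} - b), starting from λ⁰ = 0; moreover p^k = Aᵀλ^k for all k. -/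
open scoped RealInnerProductSpace

/-!
With `p = Aᵀλ`, the Bregman objective `J z - J x₀ - ⟪p, z - x₀⟫ + ½‖Az - b‖²` and the augmented
Lagrangian `J z - ⟪λ, Az - b⟫ + ½‖Az - b‖²` differ by a constant independent of `z`, so they have the
same minimisers. The updates `p ↦ p - Aᵀ(Ax - b)` and `λ ↦ λ - (Ax - b)` preserve `p = Aᵀλ`, which
holds initially since `p⁰ = λ⁰ = 0`; by induction both methods take the same steps.
-/

noncomputable section

variable {V W : Type*} [NormedAddCommGroup V] [InnerProductSpace ℝ V] [CompleteSpace V]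
  [NormedAddCommGroup W] [InnerProductSpace ℝ W] [CompleteSpace W]

abbrev bregmanObjective (J : V → ℝ) (A : V →L[ℝ] W) (b : W) (x₀ p : V) (z : V) : ℝ :=
  J z - J x₀ - ⟪p, z - x₀⟫ + (1 / 2) * ‖A z - b‖ ^ 2

abbrev augLagrangian (J : V → ℝ) (A : V →L[ℝ] W) (b : W) (lam : W) (z : V) : ℝ :=
  J z - ⟪lam, A z - b⟫ + (1 / 2) * ‖A z - b‖ ^ 2

theorem bregmanObjective_adjoint_sub_augLagrangian (J : V → ℝ) (A : V →L[ℝ] W) (b : W)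
    (x₀ : V) (lam : W) (z : V) :
    bregmanObjective J A b x₀ (ContinuousLinearMap.adjoint A lam) z - augLagrangian J A b lam z
      = ⟪lam, A x₀ - b⟫ - J x₀ := by
  simp only [bregmanObjective, augLagrangian, inner_sub_right,
    ContinuousLinearMap.adjoint_inner_left]
  ring

theorem bregmanObjective_adjoint_le_of_augLagrangian_le {J : V → ℝ} {A : V →L[ℝ] W} {b : W}
    {x₀ : V} {lam : W} {x' : V}
    (hmin : ∀ z, augLagrangian J A b lam x' ≤ augLagrangian J A b lam z) :
    ∀ z, bregmanObjective J A b x₀ (ContinuousLinearMap.adjoint A lam) x' ≤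
      bregmanObjective J A b x₀ (ContinuousLinearMap.adjoint A lam) z := fun z => by
  linarith [hmin z, bregmanObjective_adjoint_sub_augLagrangian J A b x₀ lam x',
    bregmanObjective_adjoint_sub_augLagrangian J A b x₀ lam z]

end

theorem bregman_eq_augmented_lagrangian_general {m n : ℕ}
    (J : E n → ℝ)
    (A : E n →L[ℝ] E m) (b : E m)
    (x xa p : ℕ → E n) (lam : ℕ → E m)
    (hx0 : x 0 = 0) (hp0 : p 0 = 0) (hxa0 : xa 0 = 0) (hlam0 : lam 0 = 0)
    (hxuniq : ∀ k, ∀ z : E n,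
      (∀ u : E n,
        J z - J (x k) - ⟪p k, z - x k⟫ + (1 / 2) * ‖A z - b‖ ^ 2 ≤
          J u - J (x k) - ⟪p k, u - x k⟫ + (1 / 2) * ‖A u - b‖ ^ 2) →
      z = x (k + 1))
    (hp : ∀ k, p (k + 1) = p k - (ContinuousLinearMap.adjoint A) (A (x (k + 1)) - b))
    (hxamin : ∀ k, ∀ z : E n,
      J (xa (k + 1)) - ⟪lam k, A (xa (k + 1)) - b⟫ +
          (1 / 2) * ‖A (xa (k + 1)) - b‖ ^ 2 ≤
        J z - ⟪lam k, A z - b⟫ + (1 / 2) * ‖A z - b‖ ^ 2)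
    (hlam : ∀ k, lam (k + 1) = lam k - (A (xa (k + 1)) - b)) :
    ∀ k, x k = xa k ∧ p k = (ContinuousLinearMap.adjoint A) (lam k) := by
  intro k
  induction k with
  | zero => exact ⟨hx0.trans hxa0.symm, by rw [hp0, hlam0, map_zero]⟩
  | succ k ih =>
    have hpk : p k = ContinuousLinearMap.adjoint A (lam k) := ih.2
    have hx_succ : x (k + 1) = xa (k + 1) := by
      refine (hxuniq k _ ?_).symm
      rw [hpk]
      exact bregmanObjective_adjoint_le_of_augLagrangian_le (hxamin k)
    refine ⟨hx_succ, ?_⟩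
    rw [hp k, hlam k, hpk, hx_succ, ← map_sub]

theorem bregman_eq_augmented_lagrangian {m n : ℕ}
    (J : E n → ℝ) (hJ : ConvexOn ℝ Set.univ J)
    (A : E n →L[ℝ] E m) (b : E m)
    (x xa p : ℕ → E n) (lam : ℕ → E m)
    (hx0 : x 0 = 0) (hp0 : p 0 = 0) (hxa0 : xa 0 = 0) (hlam0 : lam 0 = 0)
    (hxmin : ∀ k, ∀ z : E n,
      J (x (k + 1)) - J (x k) - ⟪p k, x (k + 1) - x k⟫ +
          (1 / 2) * ‖A (x (k + 1)) - b‖ ^ 2 ≤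
        J z - J (x k) - ⟪p k, z - x k⟫ + (1 / 2) * ‖A z - b‖ ^ 2)
    (hxuniq : ∀ k, ∀ z : E n,
      (∀ u : E n,
        J z - J (x k) - ⟪p k, z - x k⟫ + (1 / 2) * ‖A z - b‖ ^ 2 ≤
          J u - J (x k) - ⟪p k, u - x k⟫ + (1 / 2) * ‖A u - b‖ ^ 2) →
      z = x (k + 1))
    (hp : ∀ k, p (k + 1) = p k - (ContinuousLinearMap.adjoint A) (A (x (k + 1)) - b))
    (hxamin : ∀ k, ∀ z : E n,
      J (xa (k + 1)) - ⟪lam k, A (xa (k + 1)) - b⟫ +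
          (1 / 2) * ‖A (xa (k + 1)) - b‖ ^ 2 ≤
        J z - ⟪lam k, A z - b⟫ + (1 / 2) * ‖A z - b‖ ^ 2)
    (hlam : ∀ k, lam (k + 1) = lam k - (A (xa (k + 1)) - b)) :
    ∀ k, x k = xa k ∧ p k = (ContinuousLinearMap.adjoint A) (lam k) :=
  bregman_eq_augmented_lagrangian_general J A b x xa p lam hx0 hp0 hxa0 hlam0 hxuniq hp hxamin hlam
end

section
/- Let G : R^m → R be convex and differentiable with L-Lipschitz gradient and minimizer y*, let 0 < τ ≤ 1/L, and let θ_k = 2/(k+2), α_k = 1 + θ_{k+1}(θ_k^{-1} - 1). Then the accelerated gradient iterates defined by y^{k+1} = ỹ^k - τ∇G(ỹ^k), ỹ^{k+1} = α_k y^{k+1} + (1 - α_k)y^k, starting from ỹ⁰ = y⁰, satisfy G(y^k) - G(y*) ≤ 2‖y* - y⁰‖²/(τ k²) for all k ≥ 1. -/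
open Set AffineMap
open scoped RealInnerProductSpace

theorem smul_inv_smul_momentum {K V : Type*} [Field K] [AddCommGroup V] [Module K V]
    {θ θ' α : K} (hθ : θ ≠ 0) (hθ' : θ' ≠ 0) (hα : α = 1 + θ' * (θ⁻¹ - 1)) (y y' : V) :
    θ • θ'⁻¹ • (α • y' + (1 - α) • y - (1 - θ') • y') = y' - (1 - θ) • y := by
  subst hα
  match_scalars <;> field_simp <;> ring

theorem accelerated_potential_le {θ e D : ℕ → ℝ} (hθ₀ : θ 0 = 1) (hθpos : ∀ k, 0 < θ k)
    (hθ₁ : ∀ k, θ k ≤ 1) (hθsucc : ∀ k, (1 - θ (k + 1)) * θ k ^ 2 ≤ θ (k + 1) ^ 2)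
    (he : ∀ k, 0 ≤ e k) (hstep : ∀ k, e (k + 1) ≤ (1 - θ k) * e k + θ k ^ 2 * (D k - D (k + 1)))
    (k : ℕ) : e (k + 1) + θ k ^ 2 * D (k + 1) ≤ θ k ^ 2 * D 0 := by
  induction k with
  | zero =>
    have := hstep 0
    simp only [hθ₀, sub_self, zero_mul, one_pow, one_mul, zero_add] at this ⊢
    linarith
  | succ k ih =>
    have hgap : 0 ≤ D 0 - D (k + 1) := by
      have : 0 ≤ θ k ^ 2 * (D 0 - D (k + 1)) := by linarith [he (k + 1)]
      exact nonneg_of_mul_nonneg_right (by linarith) (pow_pos (hθpos k) 2)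
    have hprev : (1 - θ (k + 1)) * e (k + 1) ≤ θ (k + 1) ^ 2 * (D 0 - D (k + 1)) :=
      calc (1 - θ (k + 1)) * e (k + 1)
          ≤ (1 - θ (k + 1)) * (θ k ^ 2 * (D 0 - D (k + 1))) := by
            gcongr
            · linarith [hθ₁ (k + 1)]
            · linarith
        _ ≤ θ (k + 1) ^ 2 * (D 0 - D (k + 1)) := by
            rw [← mul_assoc]; exact mul_le_mul_of_nonneg_right (hθsucc k) hgap
    linarith [hstep (k + 1)]

section GradientMethod

variable {F : Type*} [NormedAddCommGroup F] [InnerProductSpace ℝ F] [CompleteSpace F]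
  {G : F → ℝ} {g : F → F} {L τ : ℝ}

theorem HasGradientAt.hasDerivAt_comp_lineMap {G' x z : F} {t : ℝ}
    (hG : HasGradientAt G G' (lineMap x z t)) :
    HasDerivAt (fun s : ℝ ↦ G (lineMap x z s)) ⟪G', z - x⟫ t :=
  hG.hasFDerivAt.comp_hasDerivAt t hasDerivAt_lineMap

theorem ConvexOn.add_inner_le_of_hasGradientAt (hconv : ConvexOn ℝ univ G) {G' x : F}
    (hG : HasGradientAt G G' x) (z : F) : G x + ⟪G', z - x⟫ ≤ G z := by
  have hφ : ConvexOn ℝ univ (fun s : ℝ ↦ G (lineMap x z s)) :=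
    hconv.comp_affineMap (lineMap x z)
  have hderiv := HasGradientAt.hasDerivAt_comp_lineMap (z := z) (t := 0) (by simpa using hG)
  have := hφ.le_slope_of_hasDerivAt (mem_univ 0) (mem_univ 1) zero_lt_one hderiv
  simp only [slope_def_field, lineMap_apply_one, lineMap_apply_zero, sub_zero, div_one] at this
  linarith

theorem le_add_inner_add_sq_of_lipschitz_gradient (hgrad : ∀ y, HasGradientAt G (g y) y)
    (hlip : ∀ y₁ y₂, ‖g y₁ - g y₂‖ ≤ L * ‖y₁ - y₂‖) (x z : F) :
    G z ≤ G x + ⟪g x, z - x⟫ + L / 2 * ‖z - x‖ ^ 2 := by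
  set ψ : ℝ → ℝ := fun t ↦ G (lineMap x z t) - t * ⟪g x, z - x⟫ - L / 2 * t ^ 2 * ‖z - x‖ ^ 2
  have hψ : ∀ t, HasDerivAt ψ
      (⟪g (lineMap x z t) - g x, z - x⟫ - L * t * ‖z - x‖ ^ 2) t := by
    intro t
    have h := (((hgrad (lineMap x z t)).hasDerivAt_comp_lineMap).sub
      ((hasDerivAt_id t).mul_const ⟪g x, z - x⟫)).sub
      (((hasDerivAt_pow 2 t).const_mul (L / 2)).mul_const (‖z - x‖ ^ 2))
    refine h.congr_deriv ?_
    rw [inner_sub_left, one_mul, Nat.add_one_sub_one, pow_one]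
    ring
  have hanti : AntitoneOn ψ (Ici 0) := by
    refine antitoneOn_of_hasDerivWithinAt_nonpos (convex_Ici 0)
      (fun t _ ↦ (hψ t).continuousAt.continuousWithinAt)
      (fun t _ ↦ (hψ t).hasDerivWithinAt) fun t ht ↦ ?_
    rw [interior_Ici] at ht
    have hdist : ‖lineMap x z t - x‖ = t * ‖z - x‖ := by
      rw [lineMap_apply_module', add_sub_cancel_right, norm_smul, Real.norm_of_nonneg ht.out.le]
    calc ⟪g (lineMap x z t) - g x, z - x⟫ - L * t * ‖z - x‖ ^ 2
        ≤ ‖g (lineMap x z t) - g x‖ * ‖z - x‖ - L * t * ‖z - x‖ ^ 2 := by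
          gcongr; exact real_inner_le_norm _ _
      _ ≤ L * ‖lineMap x z t - x‖ * ‖z - x‖ - L * t * ‖z - x‖ ^ 2 := by
          gcongr; exact hlip _ _
      _ = 0 := by rw [hdist]; ring
  have := hanti self_mem_Ici (mem_Ici.mpr zero_le_one) zero_le_one
  simp only [ψ, lineMap_apply_one, lineMap_apply_zero] at this
  linarith

theorem gradient_step_le (hconv : ConvexOn ℝ univ G) (hgrad : ∀ y, HasGradientAt G (g y) y)
    (hlip : ∀ y₁ y₂, ‖g y₁ - g y₂‖ ≤ L * ‖y₁ - y₂‖) (hτ : 0 < τ) (hτL : τ * L ≤ 1) (x z : F) :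
    G (x - τ • g x) - G z ≤ (‖x - z‖ ^ 2 - ‖x - τ • g x - z‖ ^ 2) / (2 * τ) := by
  have hdescent := le_add_inner_add_sq_of_lipschitz_gradient hgrad hlip x (x - τ • g x)
  have hconvex := hconv.add_inner_le_of_hasGradientAt (hgrad x) z
  rw [sub_sub_cancel_left, norm_neg, inner_neg_right, inner_smul_right, real_inner_self_eq_norm_sq,
    norm_smul, Real.norm_of_nonneg hτ.le] at hdescent
  have hrhs : (‖x - z‖ ^ 2 - ‖x - τ • g x - z‖ ^ 2) / (2 * τ)
      = ⟪g x, x - z⟫ - τ / 2 * ‖g x‖ ^ 2 := by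
    rw [sub_right_comm, norm_sub_sq_real (x - z), inner_smul_right, real_inner_comm, norm_smul,
      Real.norm_of_nonneg hτ.le]
    field_simp
    ring
  have hshort : L * τ ^ 2 * ‖g x‖ ^ 2 ≤ τ * ‖g x‖ ^ 2 :=
    mul_le_mul_of_nonneg_right (by nlinarith) (sq_nonneg _)
  rw [← neg_sub x z, inner_neg_right] at hconvex
  rw [hrhs]
  linarith

theorem accelerated_step_le (hconv : ConvexOn ℝ univ G) (hgrad : ∀ y, HasGradientAt G (g y) y)
    (hlip : ∀ y₁ y₂, ‖g y₁ - g y₂‖ ≤ L * ‖y₁ - y₂‖) (hτ : 0 < τ) (hτL : τ * L ≤ 1) {θ : ℝ}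
    (hθ₀ : 0 ≤ θ) (hθ₁ : θ ≤ 1) {x y v v' : F} (z : F) (hv : θ • v = x - (1 - θ) • y)
    (hv' : θ • v' = x - τ • g x - (1 - θ) • y) :
    G (x - τ • g x) - G z
      ≤ (1 - θ) * (G y - G z) + θ ^ 2 * ((‖v - z‖ ^ 2 - ‖v' - z‖ ^ 2) / (2 * τ)) := by
  set w := (1 - θ) • y + θ • z with hw_def
  have hstep := gradient_step_le hconv hgrad hlip hτ hτL x w
  have hx : x - w = θ • (v - z) := by rw [smul_sub, hv, hw_def]; abel
  have hx' : x - τ • g x - w = θ • (v' - z) := by rw [smul_sub, hv', hw_def]; abel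
  have hw : G w ≤ (1 - θ) * G y + θ * G z :=
    hconv.2 (mem_univ y) (mem_univ z) (by linarith) hθ₀ (by ring)
  rw [hx, hx', norm_smul, norm_smul, Real.norm_of_nonneg hθ₀] at hstep
  have hscale : ((θ * ‖v - z‖) ^ 2 - (θ * ‖v' - z‖) ^ 2) / (2 * τ)
      = θ ^ 2 * ((‖v - z‖ ^ 2 - ‖v' - z‖ ^ 2) / (2 * τ)) := by ring
  linarith

theorem accelerated_gradient_sub_le (hconv : ConvexOn ℝ univ G)
    (hgrad : ∀ y, HasGradientAt G (g y) y) (hlip : ∀ y₁ y₂, ‖g y₁ - g y₂‖ ≤ L * ‖y₁ - y₂‖)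
    (hτ : 0 < τ) (hτL : τ * L ≤ 1) {z : F} (hmin : ∀ y, G z ≤ G y) {θ α : ℕ → ℝ}
    (hθ₀ : θ 0 = 1) (hθpos : ∀ k, 0 < θ k) (hθ₁ : ∀ k, θ k ≤ 1)
    (hθsucc : ∀ k, (1 - θ (k + 1)) * θ k ^ 2 ≤ θ (k + 1) ^ 2)
    (hα : ∀ k, α k = 1 + θ (k + 1) * ((θ k)⁻¹ - 1)) {y ty : ℕ → F} (h0 : ty 0 = y 0)
    (hy : ∀ k, y (k + 1) = ty k - τ • g (ty k))
    (hty : ∀ k, ty (k + 1) = α k • y (k + 1) + (1 - α k) • y k) (k : ℕ) :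
    G (y (k + 1)) - G z ≤ θ k ^ 2 * (‖z - y 0‖ ^ 2 / (2 * τ)) := by
  set v : ℕ → F := fun k ↦ (θ k)⁻¹ • (ty k - (1 - θ k) • y k) with hv_def
  have hv : ∀ k, θ k • v k = ty k - (1 - θ k) • y k := fun k ↦ smul_inv_smul₀ (hθpos k).ne' _
  have hv_succ : ∀ k, θ k • v (k + 1) = y (k + 1) - (1 - θ k) • y k := fun k ↦ by
    simp only [hv_def, hty k]
    exact smul_inv_smul_momentum (hθpos k).ne' (hθpos (k + 1)).ne' (hα k) _ _
  have hpot := accelerated_potential_le (e := fun k ↦ G (y k) - G z)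
    (D := fun k ↦ ‖v k - z‖ ^ 2 / (2 * τ)) hθ₀ hθpos hθ₁ hθsucc
    (fun k ↦ sub_nonneg.mpr (hmin _)) (fun k ↦ by
      rw [← sub_div, hy k]
      exact accelerated_step_le hconv hgrad hlip hτ hτL (hθpos k).le (hθ₁ k) z (hv k)
        (hy k ▸ hv_succ k)) k
  have hv0 : v 0 = y 0 := by simp [hv_def, hθ₀, h0]
  rw [hv0, norm_sub_rev (y 0)] at hpot
  have : 0 ≤ θ k ^ 2 * (‖v (k + 1) - z‖ ^ 2 / (2 * τ)) := by positivity
  linarith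

end GradientMethod

theorem one_sub_mul_sq_le_of_eq_two_div {θ : ℕ → ℝ} (hθ : ∀ k : ℕ, θ k = 2 / ((k : ℝ) + 2))
    (k : ℕ) : (1 - θ (k + 1)) * θ k ^ 2 ≤ θ (k + 1) ^ 2 := by
  rw [hθ, hθ, div_pow, div_pow, one_sub_div (by positivity), div_mul_div_comm,
    div_le_div_iff₀ (by positivity) (by positivity)]
  push_cast
  nlinarith [k.cast_nonneg (α := ℝ)]

theorem accelerated_gradient_complexity {m : ℕ}
    (G : E m → ℝ) (g : E m → E m) (L τ : ℝ)
    (hconv : ConvexOn ℝ Set.univ G)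
    (hgrad : ∀ y, HasGradientAt G (g y) y)
    (hlip : ∀ y₁ y₂ : E m, ‖g y₁ - g y₂‖ ≤ L * ‖y₁ - y₂‖)
    (ystar : E m) (hmin : ∀ y, G ystar ≤ G y)
    (hτ0 : 0 < τ) (hτ : τ ≤ 1 / L)
    (θ α : ℕ → ℝ)
    (hθ : ∀ k : ℕ, θ k = 2 / ((k : ℝ) + 2))
    (hα : ∀ k : ℕ, α k = 1 + θ (k + 1) * ((θ k)⁻¹ - 1))
    (y ty : ℕ → E m) (h0 : ty 0 = y 0)
    (hy : ∀ k, y (k + 1) = ty k - τ • g (ty k))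
    (hty : ∀ k, ty (k + 1) = α k • y (k + 1) + (1 - α k) • y k) :
    ∀ k : ℕ, 1 ≤ k →
      G (y k) - G ystar ≤ 2 * ‖ystar - y 0‖ ^ 2 / (τ * (k : ℝ) ^ 2) := by
  intro k hk
  obtain ⟨j, rfl⟩ := Nat.exists_eq_add_of_le' hk
  have hL : 0 < L := one_div_pos.mp (hτ0.trans_le hτ)
  have hθpos : ∀ k, 0 < θ k := fun k ↦ by rw [hθ]; positivity
  have hθ₁ : ∀ k, θ k ≤ 1 := fun k ↦ by
    rw [hθ, div_le_one (by positivity)]; linarith [k.cast_nonneg (α := ℝ)]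
  calc G (y (j + 1)) - G ystar ≤ θ j ^ 2 * (‖ystar - y 0‖ ^ 2 / (2 * τ)) :=
        accelerated_gradient_sub_le hconv hgrad hlip hτ0 ((le_div_iff₀ hL).mp hτ) hmin
          (by simpa using hθ 0) hθpos hθ₁ (one_sub_mul_sq_le_of_eq_two_div hθ) hα h0 hy hty j
    _ = 2 * ‖ystar - y 0‖ ^ 2 / (τ * ((j : ℝ) + 2) ^ 2) := by rw [hθ]; field_simp
    _ ≤ 2 * ‖ystar - y 0‖ ^ 2 / (τ * ((j + 1 : ℕ) : ℝ) ^ 2) := by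
        gcongr; push_cast; linarith
end

section
/- Let J be convex and μ > 0. The sequences {x^k} generated by the linearized Bregman method (x⁰ = p⁰ = 0; x^{k+1} = argmin_x { J(x) - ⟨p^k, x⟩ + τ⟨Aᵀ(Ax^k - b), x⟩ + (1/(2μ))‖x - x^k‖² }; p^{k+1} = p^k - τAᵀ(Ax^k - b) - (1/μ)(x^{k+1} - x^k)) and {w^k} generated by the dual gradient method (y⁰ = τb; w^{k+1} = argmin_w { J(w) + (1/(2μ))‖w‖² - ⟨y^k, Aw - b⟩ }; y^{k+1} = y^k - τ(Aw^{k+1} - b)) coincide: x^k = w^k for all k ≥ 1. -/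
open scoped RealInnerProductSpace

/-!
Both methods minimise `J` plus a quadratic. As long as `Aᵀ y^k = p^k - τ Aᵀ(A x^k - b) + x^k / μ`,
the dual objective at step `k` differs from the linearized Bregman objective at step `k` by a
constant, so `x^{k+1}` is the (unique) dual minimiser `w^{k+1}`; and the two update rules then
carry this invariant from `k` to `k + 1`.
-/

open scoped InnerProduct

namespace LinearizedBregman

variable {F G : Type*} [NormedAddCommGroup F] [InnerProductSpace ℝ F] [CompleteSpace F]
  [NormedAddCommGroup G] [InnerProductSpace ℝ G] [CompleteSpace G]

noncomputable def bregmanObjective (J : F → ℝ) (A : F →L[ℝ] G) (b : G) (μ τ : ℝ) (p x : F) (u : F) : ℝ :=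
  J u - ⟪p, u⟫ + τ * ⟪(A†) (A x - b), u⟫ + (1 / (2 * μ)) * ‖u - x‖ ^ 2

noncomputable def dualObjective (J : F → ℝ) (A : F →L[ℝ] G) (b : G) (μ : ℝ) (y : G) (u : F) : ℝ :=
  J u + (1 / (2 * μ)) * ‖u‖ ^ 2 - ⟪y, A u - b⟫

def DualInvariant (A : F →L[ℝ] G) (b : G) (μ τ : ℝ) (y : G) (p x : F) : Prop :=
  (A†) y = p - τ • (A†) (A x - b) + μ⁻¹ • x

theorem dualInvariant_zero (A : F →L[ℝ] G) (b : G) (μ τ : ℝ) :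
    DualInvariant A b μ τ (τ • b) 0 0 := by
  simp [DualInvariant, map_smul]

theorem DualInvariant.succ {A : F →L[ℝ] G} {b : G} {μ τ : ℝ} {y : G} {p x x' : F}
    (h : DualInvariant A b μ τ y p x) :
    DualInvariant A b μ τ (y - τ • (A x' - b))
      (p - τ • (A†) (A x - b) - μ⁻¹ • (x' - x)) x' := by
  unfold DualInvariant at h ⊢
  rw [map_sub, map_smul, h]
  module

theorem DualInvariant.dualObjective_eq {J : F → ℝ} {A : F →L[ℝ] G} {b : G} {μ τ : ℝ} {y : G}
    {p x : F} (h : DualInvariant A b μ τ y p x) (u : F) :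
    dualObjective J A b μ y u =
      bregmanObjective J A b μ τ p x u + (⟪y, b⟫ - (1 / (2 * μ)) * ‖x‖ ^ 2) := by
  have hyAu : ⟪y, A u⟫ = ⟪p, u⟫ - τ * ⟪(A†) (A x - b), u⟫ + μ⁻¹ * ⟪x, u⟫ := by
    rw [← ContinuousLinearMap.adjoint_inner_left, h, inner_add_left, inner_sub_left,
      real_inner_smul_left, real_inner_smul_left]
  rw [dualObjective, bregmanObjective, inner_sub_right, hyAu, norm_sub_sq_real,
    real_inner_comm x u]
  field_simp
  ring

theorem DualInvariant.dualObjective_le_of_bregmanObjective_le {J : F → ℝ} {A : F →L[ℝ] G}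
    {b : G} {μ τ : ℝ} {y : G} {p x x' : F} (h : DualInvariant A b μ τ y p x)
    (hmin : ∀ u, bregmanObjective J A b μ τ p x x' ≤ bregmanObjective J A b μ τ p x u) (u : F) :
    dualObjective J A b μ y x' ≤ dualObjective J A b μ y u := by
  rw [h.dualObjective_eq, h.dualObjective_eq]
  exact add_le_add_left (hmin u) _

end LinearizedBregman

open LinearizedBregman in
theorem linearized_bregman_eq_dual_gradient_general {m n : ℕ}
    (J : E n → ℝ)
    (A : E n →L[ℝ] E m) (b : E m) (μ τ : ℝ)
    (x p w : ℕ → E n) (y : ℕ → E m)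
    (hx0 : x 0 = 0) (hp0 : p 0 = 0) (hy0 : y 0 = τ • b)
    (hxmin : ∀ k, ∀ u : E n,
      J (x (k + 1)) - ⟪p k, x (k + 1)⟫ +
          τ * ⟪(ContinuousLinearMap.adjoint A) (A (x k) - b), x (k + 1)⟫ +
          (1 / (2 * μ)) * ‖x (k + 1) - x k‖ ^ 2 ≤
        J u - ⟪p k, u⟫ +
          τ * ⟪(ContinuousLinearMap.adjoint A) (A (x k) - b), u⟫ +
          (1 / (2 * μ)) * ‖u - x k‖ ^ 2)
    (hp : ∀ k, p (k + 1) = p k - τ • (ContinuousLinearMap.adjoint A) (A (x k) - b)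
      - μ⁻¹ • (x (k + 1) - x k))
    (hwuniq : ∀ k, ∀ u : E n,
      (∀ v : E n,
        J u + (1 / (2 * μ)) * ‖u‖ ^ 2 - ⟪y k, A u - b⟫ ≤
          J v + (1 / (2 * μ)) * ‖v‖ ^ 2 - ⟪y k, A v - b⟫) → u = w (k + 1))
    (hy : ∀ k, y (k + 1) = y k - τ • (A (w (k + 1)) - b)) :
    ∀ k : ℕ, 1 ≤ k → x k = w k := by
  have step (k : ℕ) (h : DualInvariant A b μ τ (y k) (p k) (x k)) : x (k + 1) = w (k + 1) :=
    hwuniq k _ (h.dualObjective_le_of_bregmanObjective_le (hxmin k))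
  have invariant (k : ℕ) : DualInvariant A b μ τ (y k) (p k) (x k) := by
    induction k with
    | zero => rw [hx0, hp0, hy0]; exact dualInvariant_zero A b μ τ
    | succ k ih => rw [hy k, hp k, ← step k ih]; exact ih.succ
  intro k hk
  obtain ⟨j, rfl⟩ := Nat.exists_eq_add_of_le' hk
  exact step j (invariant j)

theorem linearized_bregman_eq_dual_gradient {m n : ℕ}
    (J : E n → ℝ) (hJ : ConvexOn ℝ Set.univ J)
    (A : E n →L[ℝ] E m) (b : E m) (μ τ : ℝ) (hμ : 0 < μ) (hτ : 0 < τ)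
    (x p w : ℕ → E n) (y : ℕ → E m)
    (hx0 : x 0 = 0) (hp0 : p 0 = 0) (hy0 : y 0 = τ • b)
    (hxmin : ∀ k, ∀ u : E n,
      J (x (k + 1)) - ⟪p k, x (k + 1)⟫ +
          τ * ⟪(ContinuousLinearMap.adjoint A) (A (x k) - b), x (k + 1)⟫ +
          (1 / (2 * μ)) * ‖x (k + 1) - x k‖ ^ 2 ≤
        J u - ⟪p k, u⟫ +
          τ * ⟪(ContinuousLinearMap.adjoint A) (A (x k) - b), u⟫ +
          (1 / (2 * μ)) * ‖u - x k‖ ^ 2)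
    (hxuniq : ∀ k, ∀ u : E n,
      (∀ v : E n,
        J u - ⟪p k, u⟫ +
            τ * ⟪(ContinuousLinearMap.adjoint A) (A (x k) - b), u⟫ +
            (1 / (2 * μ)) * ‖u - x k‖ ^ 2 ≤
          J v - ⟪p k, v⟫ +
            τ * ⟪(ContinuousLinearMap.adjoint A) (A (x k) - b), v⟫ +
            (1 / (2 * μ)) * ‖v - x k‖ ^ 2) → u = x (k + 1))
    (hp : ∀ k, p (k + 1) = p k - τ • (ContinuousLinearMap.adjoint A) (A (x k) - b)
      - μ⁻¹ • (x (k + 1) - x k))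
    (hwmin : ∀ k, ∀ u : E n,
      J (w (k + 1)) + (1 / (2 * μ)) * ‖w (k + 1)‖ ^ 2 - ⟪y k, A (w (k + 1)) - b⟫ ≤
        J u + (1 / (2 * μ)) * ‖u‖ ^ 2 - ⟪y k, A u - b⟫)
    (hwuniq : ∀ k, ∀ u : E n,
      (∀ v : E n,
        J u + (1 / (2 * μ)) * ‖u‖ ^ 2 - ⟪y k, A u - b⟫ ≤
          J v + (1 / (2 * μ)) * ‖v‖ ^ 2 - ⟪y k, A v - b⟫) → u = w (k + 1))
    (hy : ∀ k, y (k + 1) = y k - τ • (A (w (k + 1)) - b)) :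
    ∀ k : ℕ, 1 ≤ k → x k = w k :=
  linearized_bregman_eq_dual_gradient_general J A b μ τ x p w y hx0 hp0 hy0 hxmin hp hwuniq hy
end
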